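/- arXiv:math/9810129 — 4 statements merged into one kernel-verified Lean document; each statement's English description precedes it below -/
import Mathlib

section
/- If Y is a continuum in which every subcontinuum has a cut point, then Y is not the continuous exactly 2-to-1 image of any continuum. -/
open Set

/-- The intersection of a chain of nonempty compact preconnected sets in a Hausdorff
space is preconnected. -/
lemma NW.isPreconnected_sInter_chain {α : Type*} [TopologicalSpace α] [T2Space α]
    {S : Set (Set α)} (hch : IsChain (· ⊆ ·) S) (hne : S.Nonempty)
    (hcp : ∀ s ∈ S, IsCompact s) (hco : ∀ s ∈ S, IsPreconnected s)
    (hn : ∀ s ∈ S, s.Nonempty) :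
    IsPreconnected (⋂₀ S) := by
  intro U V hU hV hcov ⟨a, haT, haU⟩ ⟨b, hbT, hbV⟩
  by_contra hemp
  rw [not_nonempty_iff_eq_empty] at hemp
  obtain ⟨s₀, hs₀⟩ := hne
  have hclS : ∀ s ∈ S, IsClosed s := fun s hs => (hcp s hs).isClosed
  have hTcl : IsClosed (⋂₀ S) := isClosed_sInter hclS
  have hTs₀ : ⋂₀ S ⊆ s₀ := sInter_subset_of_mem hs₀
  have hTcp : IsCompact (⋂₀ S) := (hcp s₀ hs₀).of_isClosed_subset hTcl hTs₀
  -- the two pieces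
  have hemp' : ∀ z, z ∈ ⋂₀ S → z ∈ U → z ∈ V → False := fun z h1 h2 h3 => by
    have : z ∈ ⋂₀ S ∩ (U ∩ V) := ⟨h1, h2, h3⟩
    rw [hemp] at this; exact this
  have haV : a ∉ V := fun h => hemp' a haT haU h
  have hbU : b ∉ U := fun h => hemp' b hbT h hbV
  have hC₁ : IsCompact (⋂₀ S \ V) := hTcp.diff hV
  have hC₂ : IsCompact (⋂₀ S \ U) := hTcp.diff hU
  have hdis : Disjoint (⋂₀ S \ V) (⋂₀ S \ U) := by
    rw [disjoint_left]
    rintro z ⟨hz, hzV⟩ ⟨-, hzU⟩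
    rcases hcov hz with h | h
    exacts [hzU h, hzV h]
  obtain ⟨U', V', hU', hV', hCU', hCV', hUV'⟩ :=
    SeparatedNhds.of_isCompact_isCompact hC₁ hC₂ hdis
  -- each s \ (U' ∪ V') is nonempty
  have key : ∀ s ∈ S, (s \ (U' ∪ V')).Nonempty := by
    intro s hs
    by_contra hsub
    rw [not_nonempty_iff_eq_empty, diff_eq_empty] at hsub
    have h1 : (s ∩ U').Nonempty := ⟨a, sInter_subset_of_mem hs haT, hCU' ⟨haT, haV⟩⟩
    have h2 : (s ∩ V').Nonempty := ⟨b, sInter_subset_of_mem hs hbT, hCV' ⟨hbT, hbU⟩⟩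
    obtain ⟨z, -, hz⟩ := hco s hs U' V' hU' hV' hsub h1 h2
    exact (hUV'.le_bot hz).elim
  -- Cantor intersection
  haveI : Nonempty S := ⟨⟨s₀, hs₀⟩⟩
  have hdir : Directed (· ⊇ ·) (fun s : S => (s : Set α) \ (U' ∪ V')) := by
    rintro ⟨s, hs⟩ ⟨t, ht⟩
    rcases eq_or_ne s t with rfl | hst
    · exact ⟨⟨s, hs⟩, le_refl _, le_refl _⟩
    rcases hch hs ht hst with h | h
    · exact ⟨⟨s, hs⟩, le_refl _, diff_subset_diff_left h⟩
    · exact ⟨⟨t, ht⟩, diff_subset_diff_left h, le_refl _⟩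
  obtain ⟨z, hz⟩ := IsCompact.nonempty_iInter_of_directed_nonempty_isCompact_isClosed
    (fun s : S => (s : Set α) \ (U' ∪ V')) hdir
    (fun s => key s s.2) (fun s => (hcp s s.2).diff (hU'.union hV'))
    (fun s => (hclS s s.2).sdiff (hU'.union hV'))
  simp only [mem_iInter, mem_diff] at hz
  have hzT : z ∈ ⋂₀ S := fun s hs => (hz ⟨s, hs⟩).1
  have hzUV : z ∉ U' ∪ V' := (hz ⟨s₀, hs₀⟩).2
  rcases hcov hzT with h | h
  · exact hzUV (Or.inl (hCU' ⟨hzT, fun hzV => hemp' z hzT h hzV⟩))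
  · exact hzUV (Or.inr (hCV' ⟨hzT, fun hzU => hemp' z hzT hzU h⟩))

/-- If `W` is preconnected and `W \ {c} = A ∪ B` with `A, B` disjoint and
relatively open in `W`, then `A ∪ {c}` is preconnected. -/
lemma NW.isPreconnected_side {α : Type*} [TopologicalSpace α] {W A B : Set α} {c : α}
    {OA OB : Set α} (hW : IsPreconnected W)
    (hOA : IsOpen OA) (hOB : IsOpen OB) (hA : A = W ∩ OA) (hB : B = W ∩ OB)
    (hdis : Disjoint A B) (hunion : A ∪ B = W \ {c}) (hc : c ∈ W) :
    IsPreconnected (A ∪ {c}) := by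
  have hcA : c ∉ A := fun h => by
    have : c ∈ W \ {c} := hunion ▸ Or.inl h
    exact this.2 rfl
  have hcB : c ∉ B := fun h => by
    have : c ∈ W \ {c} := hunion ▸ Or.inr h
    exact this.2 rfl
  have hA'W : A ∪ {c} ⊆ W := by
    rintro z (hz | hz)
    · exact ((hunion ▸ Or.inl hz : z ∈ W \ {c})).1
    · exact (mem_singleton_iff.mp hz) ▸ hc
  have hA'eq : A ∪ {c} = W ∩ OBᶜ := by
    apply Subset.antisymm
    · rintro z (hz | hz)
      · refine ⟨(hA'W (Or.inl hz)), fun hzOB => ?_⟩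
        exact (hdis.le_bot ⟨hz, hB ▸ ⟨hA'W (Or.inl hz), hzOB⟩⟩)
      · rw [mem_singleton_iff.mp hz]
        exact ⟨hc, fun hcOB => hcB (hB ▸ ⟨hc, hcOB⟩)⟩
    · rintro z ⟨hzW, hzOB⟩
      rcases eq_or_ne z c with rfl | hzc
      · exact Or.inr rfl
      · have : z ∈ A ∪ B := hunion ▸ ⟨hzW, hzc⟩
        rcases this with h | h
        · exact Or.inl h
        · exact (hzOB (hB ▸ h).2).elim
  -- main argument
  have key : ∀ U V : Set α, IsOpen U → IsOpen V → A ∪ {c} ⊆ U ∪ V →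
      ((A ∪ {c}) ∩ V).Nonempty → c ∈ U → c ∉ V →
      ((A ∪ {c}) ∩ (U ∩ V)).Nonempty := by
    intro U V hU hV hcov ⟨z₀, hz₀A', hz₀V⟩ hcU hcV
    by_contra hemp
    rw [not_nonempty_iff_eq_empty] at hemp
    have hemp' : ∀ z, z ∈ A ∪ {c} → z ∈ U → z ∈ V → False := fun z h1 h2 h3 => by
      have : z ∈ (A ∪ {c}) ∩ (U ∩ V) := ⟨h1, h2, h3⟩
      rw [hemp] at this; exact this
    -- Q := (A ∪ {c}) ∩ V is clopen in W, nonempty, omits c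
    have hQeq : (A ∪ {c}) ∩ V = W ∩ (OA ∩ V) := by
      apply Subset.antisymm
      · rintro z ⟨hzA', hzV⟩
        rcases hzA' with hzA | hzc
        · exact ⟨hA'W (Or.inl hzA), (hA ▸ hzA : z ∈ W ∩ OA).2, hzV⟩
        · exact (hcV ((mem_singleton_iff.mp hzc) ▸ hzV)).elim
      · rintro z ⟨hzW, hzOA, hzV⟩
        have hzc : z ≠ c := fun h => hcV (h ▸ hzV)
        have hzAB : z ∈ A ∪ B := hunion ▸ ⟨hzW, hzc⟩
        have hzA : z ∈ A := by
          rcases hzAB with h | h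
          · exact h
          · exact (hdis.le_bot ⟨hA ▸ ⟨hzW, hzOA⟩, h⟩).elim
        exact ⟨Or.inl hzA, hzV⟩
    have hQeq2 : (A ∪ {c}) ∩ V = W ∩ (OBᶜ ∩ Uᶜ) := by
      rw [hA'eq]
      apply Subset.antisymm
      · rintro z ⟨⟨hzW, hzOB⟩, hzV⟩
        exact ⟨hzW, hzOB, fun hzU => hemp' z (hA'eq ▸ ⟨hzW, hzOB⟩) hzU hzV⟩
      · rintro z ⟨hzW, hzOB, hzU⟩
        have hz' : z ∈ A ∪ {c} := hA'eq ▸ ⟨hzW, hzOB⟩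
        rcases hcov hz' with h | h
        · exact (hzU h).elim
        · exact ⟨⟨hzW, hzOB⟩, h⟩
    -- apply preconnectedness of W to O₁ = OA ∩ V and O₂ = OB ∪ U
    obtain ⟨z, hzW, hz1, hz2⟩ := hW (OA ∩ V) (OB ∪ U) (hOA.inter hV) (hOB.union hU)
      (by
        intro w hw
        by_cases hwQ : w ∈ (A ∪ {c}) ∩ V
        · exact Or.inl (hQeq ▸ hwQ : w ∈ W ∩ (OA ∩ V)).2
        · right
          have : w ∉ OBᶜ ∩ Uᶜ := fun hmem => hwQ (hQeq2 ▸ ⟨hw, hmem⟩)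
          rcases not_and_or.mp this with h | h
          · exact Or.inl (not_not.mp h)
          · exact Or.inr (not_not.mp h))
      ⟨z₀, hA'W hz₀A', (hQeq ▸ ⟨hz₀A', hz₀V⟩ : z₀ ∈ W ∩ (OA ∩ V)).2⟩
      ⟨c, hc, Or.inr hcU⟩
    have hzQ : z ∈ (A ∪ {c}) ∩ V := hQeq ▸ ⟨hzW, hz1⟩
    have hzQ2 : z ∈ W ∩ (OBᶜ ∩ Uᶜ) := hQeq2 ▸ hzQ
    rcases hz2 with h | h
    · exact hzQ2.2.1 h
    · exact hzQ2.2.2 h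
  -- put the two symmetric cases together
  intro U V hU hV hcov h1 h2
  rcases hcov (Or.inr rfl : c ∈ A ∪ {c}) with hcU | hcV
  · by_cases hcV' : c ∈ V
    · exact ⟨c, Or.inr rfl, hcU, hcV'⟩
    · exact key U V hU hV hcov h2 hcU hcV'
  · by_cases hcU' : c ∈ U
    · exact ⟨c, Or.inr rfl, hcU', hcV⟩
    · have := key V U hV hU (fun z hz => (hcov hz).symm) h1 hcV hcU'
      obtain ⟨z, hz, hzV, hzU⟩ := this
      exact ⟨z, hz, hzU, hzV⟩

/-- A connected component in a compact subset of a T2 space is closed. -/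
lemma NW.isClosed_connectedComponentIn {X : Type*} [TopologicalSpace X] [T2Space X]
    {F : Set X} (hF : IsCompact F) {p : X} :
    IsClosed (connectedComponentIn F p) := by
  by_cases hp : p ∈ F
  · haveI : CompactSpace F := isCompact_iff_compactSpace.mp hF
    rw [connectedComponentIn_eq_image hp]
    exact ((isClosed_connectedComponent (x := (⟨p, hp⟩ : F))).isCompact.image
      continuous_subtype_val).isClosed
  · rw [connectedComponentIn_eq_empty hp]
    exact isClosed_empty

/-- In a compact subset `F` of a preconnected set `K`, if `F` minus two points is
relatively open in `K`, then every point of `F` lies in the connected component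
(in `F`) of one of the two points. -/
lemma NW.aux_component {X : Type*} [TopologicalSpace X] [T2Space X] {K F : Set X} {p q : X}
    (hK : IsPreconnected K) (hFK : F ⊆ K) (hF : IsCompact F)
    (hp : p ∈ F) (hq : q ∈ F)
    {O : Set X} (hO : IsOpen O) (hFO : F \ {p, q} = K ∩ O) :
    ∀ x ∈ F, x ∈ connectedComponentIn F p ∪ connectedComponentIn F q := by
  intro x hx
  by_contra hx'
  rw [mem_union, not_or] at hx'
  have hxp : p ∉ connectedComponentIn F x := fun h => hx'.1
    (connectedComponentIn_eq h ▸ mem_connectedComponentIn hx)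
  have hxq : q ∉ connectedComponentIn F x := fun h => hx'.2
    (connectedComponentIn_eq h ▸ mem_connectedComponentIn hx)
  haveI : CompactSpace F := isCompact_iff_compactSpace.mp hF
  set x' : F := ⟨x, hx⟩
  have hp' : (⟨p, hp⟩ : F) ∉ connectedComponent x' := fun h =>
    hxp (connectedComponentIn_eq_image hx ▸ mem_image_of_mem _ h)
  have hq' : (⟨q, hq⟩ : F) ∉ connectedComponent x' := fun h =>
    hxq (connectedComponentIn_eq_image hx ▸ mem_image_of_mem _ h)
  rw [connectedComponent_eq_iInter_isClopen, mem_iInter] at hp' hq'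
  push_neg at hp' hq'
  obtain ⟨⟨Z₁, hZ₁, hxZ₁⟩, hpZ₁⟩ := hp'
  obtain ⟨⟨Z₂, hZ₂, hxZ₂⟩, hqZ₂⟩ := hq'
  set Z : Set F := Z₁ ∩ Z₂ with hZdef
  have hZ : IsClopen Z := hZ₁.inter hZ₂
  have hxZ : x' ∈ Z := ⟨hxZ₁, hxZ₂⟩
  -- E := val '' Z
  set E : Set X := Subtype.val '' Z with hEdef
  have hEF : E ⊆ F := by rintro z ⟨w, -, rfl⟩; exact w.2
  have hxE : x ∈ E := ⟨x', hxZ, rfl⟩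
  have hpE : p ∉ E := by
    rintro ⟨w, hw, hweq⟩
    rw [show w = ⟨p, hp⟩ from Subtype.ext hweq] at hw
    exact hpZ₁ hw.1
  have hqE : q ∉ E := by
    rintro ⟨w, hw, hweq⟩
    rw [show w = ⟨q, hq⟩ from Subtype.ext hweq] at hw
    exact hqZ₂ hw.2
  have hEclosed : IsClosed E := (hZ.isClosed.isCompact.image continuous_subtype_val).isClosed
  -- Z is open in the subtype, so E = F ∩ O₁ for some open O₁
  obtain ⟨O₁, hO₁, hZO₁⟩ := isOpen_induced_iff.mp hZ.isOpen
  have hEFO₁ : E = F ∩ O₁ := by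
    apply Subset.antisymm
    · rintro z ⟨w, hw, rfl⟩
      exact ⟨w.2, by rw [← hZO₁] at hw; exact hw⟩
    · rintro z ⟨hzF, hzO₁⟩
      exact ⟨⟨z, hzF⟩, by rw [← hZO₁]; exact hzO₁, rfl⟩
  have hEKO : E ⊆ K ∩ O := by
    intro z hz
    have : z ∈ F \ {p, q} := ⟨hEF hz, by
      rintro (rfl | rfl)
      exacts [hpE hz, hqE hz]⟩
    exact hFO ▸ this
  have hEeq : E = K ∩ (O₁ ∩ O) := by
    apply Subset.antisymm
    · intro z hz
      exact ⟨(hEKO hz).1, (hEFO₁ ▸ hz).2, (hEKO hz).2⟩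
    · rintro z ⟨hzK, hzO₁, hzO⟩
      have hzF : z ∈ F := ((hFO.symm ▸ ⟨hzK, hzO⟩) : z ∈ F \ {p, q}).1
      exact hEFO₁ ▸ ⟨hzF, hzO₁⟩
  -- contradiction with preconnectedness of K
  obtain ⟨z, hzK, hz1, hz2⟩ := hK (O₁ ∩ O) Eᶜ (hO₁.inter hO) hEclosed.isOpen_compl
    (by
      intro w hw
      by_cases hwE : w ∈ E
      · exact Or.inl (hEeq ▸ hwE : w ∈ K ∩ (O₁ ∩ O)).2
      · exact Or.inr hwE)
    ⟨x, hFK hx, (hEeq ▸ hxE : x ∈ K ∩ (O₁ ∩ O)).2⟩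
    ⟨p, hFK hp, hpE⟩
  exact hz2 (hEeq ▸ ⟨hzK, hz1⟩ : z ∈ E)

/-- If `Y` is a continuum in which every (nondegenerate) subcontinuum has a cut
point, then `Y` is not the continuous exactly 2-to-1 image of any continuum. -/
theorem no_two_to_one_image_of_cut_point_continuum (Y : Type) [MetricSpace Y]
    [CompactSpace Y] [ConnectedSpace Y]
    (hcut : ∀ C : Set Y, IsCompact C → IsConnected C → C.Nontrivial →
      ∃ x ∈ C, ¬ IsPreconnected (C \ {x})) :
    ¬ ∃ (X : Type) (_ : MetricSpace X), CompactSpace X ∧ ConnectedSpace X ∧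
      ∃ f : X → Y, Continuous f ∧ Function.Surjective f ∧
        ∀ y : Y, Nat.card (f ⁻¹' {y}) = 2 := by
  rintro ⟨X, _inst, hXcomp, hXconn, f, hfc, hfs, h2⟩
  classical
  -- the family of subcontinua of `Y` with preconnected full preimage
  set S : Set (Set Y) :=
    {W | IsCompact W ∧ IsPreconnected W ∧ W.Nonempty ∧ IsPreconnected (f ⁻¹' W)} with hSdef
  have hUnivS : (univ : Set Y) ∈ S :=
    ⟨isCompact_univ, isPreconnected_univ, univ_nonempty, by
      rw [preimage_univ]; exact isPreconnected_univ⟩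
  have hchain : ∀ c ⊆ S, IsChain (· ⊆ ·) c → c.Nonempty → ∃ lb ∈ S, ∀ s ∈ c, lb ⊆ s := by
    intro c hcS hch hcne
    obtain ⟨s₀, hs₀⟩ := hcne
    haveI : Nonempty c := ⟨⟨s₀, hs₀⟩⟩
    have hdir : Directed (· ⊇ ·) (fun s : c => (s : Set Y)) := by
      rintro ⟨s, hs⟩ ⟨t, ht⟩
      rcases eq_or_ne s t with rfl | hst
      · exact ⟨⟨s, hs⟩, le_refl _, le_refl _⟩
      rcases hch hs ht hst with h | h
      · exact ⟨⟨s, hs⟩, le_refl _, h⟩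
      · exact ⟨⟨t, ht⟩, h, le_refl _⟩
    refine ⟨⋂₀ c, ⟨?_, ?_, ?_, ?_⟩, fun s hs => sInter_subset_of_mem hs⟩
    · exact ((hcS hs₀).1).of_isClosed_subset
        (isClosed_sInter fun s hs => ((hcS hs).1).isClosed) (sInter_subset_of_mem hs₀)
    · exact NW.isPreconnected_sInter_chain hch ⟨s₀, hs₀⟩ (fun s hs => (hcS hs).1)
        (fun s hs => (hcS hs).2.1) (fun s hs => (hcS hs).2.2.1)
    · rw [sInter_eq_iInter]
      exact IsCompact.nonempty_iInter_of_directed_nonempty_isCompact_isClosed _ hdir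
        (fun s => (hcS s.2).2.2.1) (fun s => (hcS s.2).1)
        (fun s => ((hcS s.2).1).isClosed)
    · have heq : f ⁻¹' ⋂₀ c = ⋂₀ ((fun s => f ⁻¹' s) '' c) := by
        rw [preimage_sInter, ← sInter_image]
      rw [heq]
      apply NW.isPreconnected_sInter_chain
      · rintro _ ⟨s, hs, rfl⟩ _ ⟨t, ht, rfl⟩ hne
        have hst : s ≠ t := fun h => hne (by rw [h])
        rcases hch hs ht hst with h | h
        · exact Or.inl (preimage_mono h)
        · exact Or.inr (preimage_mono h)
      · exact ⟨f ⁻¹' s₀, mem_image_of_mem _ hs₀⟩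
      · rintro _ ⟨s, hs, rfl⟩
        exact (((hcS hs).1).isClosed.preimage hfc).isCompact
      · rintro _ ⟨s, hs, rfl⟩
        exact (hcS hs).2.2.2
      · rintro _ ⟨s, hs, rfl⟩
        exact ((hcS hs).2.2.1).preimage hfs
  obtain ⟨W, -, hWmin⟩ := zorn_superset_nonempty S hchain univ hUnivS
  obtain ⟨hWcp, hWpre, hWne, hKpre⟩ := hWmin.1
  have hpair : ∀ y : Y, ∃ p q : X, p ≠ q ∧ f ⁻¹' {y} = {p, q} := by
    intro y
    have h := h2 y
    rw [Nat.card_coe_set_eq, Set.ncard_eq_two] at h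
    exact h
  set K := f ⁻¹' W with hKdef
  by_cases hnt : W.Nontrivial
  · -- W is nondegenerate: use a cut point
    obtain ⟨c, hcW, hncon⟩ := hcut W hWcp ⟨hWne, hWpre⟩ hnt
    rw [IsPreconnected] at hncon
    push_neg at hncon
    obtain ⟨U, V, hU, hV, hcov, h1, h1', hemp⟩ := hncon
    have hemp' : ∀ z, z ∈ W → z ≠ c → z ∈ U → z ∈ V → False := by
      intro z hzW hzc hzU hzV
      have : z ∈ W \ {c} ∩ (U ∩ V) := ⟨⟨hzW, hzc⟩, hzU, hzV⟩
      rw [hemp] at this; exact this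
    set A := W ∩ (U \ {c}) with hAdef
    set B := W ∩ (V \ {c}) with hBdef
    have hAB : A ∪ B = W \ {c} := by
      apply Subset.antisymm
      · rintro z (⟨hzW, hzU, hzc⟩ | ⟨hzW, hzV, hzc⟩) <;> exact ⟨hzW, hzc⟩
      · rintro z ⟨hzW, hzc⟩
        rcases hcov ⟨hzW, hzc⟩ with h | h
        · exact Or.inl ⟨hzW, h, hzc⟩
        · exact Or.inr ⟨hzW, h, hzc⟩
    have hdisAB : Disjoint A B := by
      rw [disjoint_left]
      rintro z ⟨hzW, hzU, hzc⟩ ⟨-, hzV, -⟩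
      exact hemp' z hzW (fun h => hzc h) hzU hzV
    have hAne : A.Nonempty := by
      obtain ⟨z, ⟨hzW, hzc⟩, hzU⟩ := h1
      exact ⟨z, hzW, hzU, hzc⟩
    have hBne : B.Nonempty := by
      obtain ⟨z, ⟨hzW, hzc⟩, hzV⟩ := h1'
      exact ⟨z, hzW, hzV, hzc⟩
    set A' := A ∪ {c} with hA'def
    set B' := B ∪ {c} with hB'def
    have hcA : c ∉ A := fun h => h.2.2 rfl
    have hcB : c ∉ B := fun h => h.2.2 rfl
    have hA'pre : IsPreconnected A' :=
      NW.isPreconnected_side hWpre (hU.sdiff isClosed_singleton)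
        (hV.sdiff isClosed_singleton) rfl rfl hdisAB hAB hcW
    have hB'pre : IsPreconnected B' :=
      NW.isPreconnected_side hWpre (hV.sdiff isClosed_singleton)
        (hU.sdiff isClosed_singleton) rfl rfl hdisAB.symm (by rw [union_comm]; exact hAB) hcW
    have hA'W : A' ⊆ W := by
      rintro z (hz | rfl)
      exacts [hz.1, hcW]
    have hB'W : B' ⊆ W := by
      rintro z (hz | rfl)
      exacts [hz.1, hcW]
    have hA'eq : A' = W \ (V \ {c}) := by
      apply Subset.antisymm
      · rintro z (⟨hzW, hzU, hzc⟩ | rfl)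
        · exact ⟨hzW, fun ⟨hzV, hzc'⟩ => hemp' z hzW hzc hzU hzV⟩
        · exact ⟨hcW, fun h => h.2 rfl⟩
      · rintro z ⟨hzW, hz⟩
        rcases eq_or_ne z c with rfl | hzc
        · exact Or.inr rfl
        · rcases hcov ⟨hzW, hzc⟩ with h | h
          · exact Or.inl ⟨hzW, h, hzc⟩
          · exact (hz ⟨h, hzc⟩).elim
    have hB'eq : B' = W \ (U \ {c}) := by
      apply Subset.antisymm
      · rintro z (⟨hzW, hzV, hzc⟩ | rfl)
        · exact ⟨hzW, fun ⟨hzU, hzc'⟩ => hemp' z hzW hzc hzU hzV⟩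
        · exact ⟨hcW, fun h => h.2 rfl⟩
      · rintro z ⟨hzW, hz⟩
        rcases eq_or_ne z c with rfl | hzc
        · exact Or.inr rfl
        · rcases hcov ⟨hzW, hzc⟩ with h | h
          · exact (hz ⟨h, hzc⟩).elim
          · exact Or.inl ⟨hzW, h, hzc⟩
    have hA'cp : IsCompact A' := by
      rw [hA'eq]; exact hWcp.diff (hV.sdiff isClosed_singleton)
    have hB'cp : IsCompact B' := by
      rw [hB'eq]; exact hWcp.diff (hU.sdiff isClosed_singleton)
    obtain ⟨p, q, hpq, hpre_c⟩ := hpair c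
    have hfp : f p = c := by
      have : p ∈ f ⁻¹' {c} := by rw [hpre_c]; exact Or.inl rfl
      exact this
    have hfq : f q = c := by
      have : q ∈ f ⁻¹' {c} := by rw [hpre_c]; exact Or.inr rfl
      exact this
    set FA := f ⁻¹' A' with hFAdef
    set FB := f ⁻¹' B' with hFBdef
    have hpFA : p ∈ FA := by show f p ∈ A'; rw [hfp]; exact Or.inr rfl
    have hqFA : q ∈ FA := by show f q ∈ A'; rw [hfq]; exact Or.inr rfl
    have hpFB : p ∈ FB := by show f p ∈ B'; rw [hfp]; exact Or.inr rfl
    have hqFB : q ∈ FB := by show f q ∈ B'; rw [hfq]; exact Or.inr rfl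
    have hFAcp : IsCompact FA := (hA'cp.isClosed.preimage hfc).isCompact
    have hFBcp : IsCompact FB := (hB'cp.isClosed.preimage hfc).isCompact
    have hFAK : FA ⊆ K := preimage_mono hA'W
    have hFBK : FB ⊆ K := preimage_mono hB'W
    have hpK : p ∈ K := hFAK hpFA
    have hqK : q ∈ K := hFAK hqFA
    have hA'c : A' \ {c} = A := by
      apply Subset.antisymm
      · rintro z ⟨hz | rfl, hzc⟩
        · exact hz
        · exact (hzc rfl).elim
      · intro z hz
        exact ⟨Or.inl hz, fun h => hcA (h ▸ hz)⟩
    have hB'c : B' \ {c} = B := by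
      apply Subset.antisymm
      · rintro z ⟨hz | rfl, hzc⟩
        · exact hz
        · exact (hzc rfl).elim
      · intro z hz
        exact ⟨Or.inl hz, fun h => hcB (h ▸ hz)⟩
    have hFAO : FA \ {p, q} = K ∩ f ⁻¹' (U \ {c}) := by
      rw [← hpre_c, ← preimage_diff, hA'c, hAdef, preimage_inter]
    have hFBO : FB \ {p, q} = K ∩ f ⁻¹' (V \ {c}) := by
      rw [← hpre_c, ← preimage_diff, hB'c, hBdef, preimage_inter]
    have hcompA := NW.aux_component hKpre hFAK hFAcp hpFA hqFA
      ((hU.sdiff isClosed_singleton).preimage hfc) hFAO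
    have hcompB := NW.aux_component hKpre hFBK hFBcp hpFB hqFB
      ((hV.sdiff isClosed_singleton).preimage hfc) hFBO
    by_cases hconA : q ∈ connectedComponentIn FA p
    · -- FA is preconnected: contradict minimality with A'
      have heq : FA = connectedComponentIn FA p := by
        apply Subset.antisymm
        · intro x hx
          rcases hcompA x hx with h | h
          · exact h
          · rwa [← connectedComponentIn_eq hconA] at h
        · exact connectedComponentIn_subset _ _
      have hA'S : A' ∈ S := ⟨hA'cp, hA'pre, ⟨c, Or.inr rfl⟩, by
        rw [show f ⁻¹' A' = FA from rfl, heq]; exact isPreconnected_connectedComponentIn⟩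
      have hWA' : W ⊆ A' := hWmin.2 hA'S hA'W
      obtain ⟨b, hbB⟩ := hBne
      rcases hWA' hbB.1 with h | h
      · exact hdisAB.le_bot ⟨h, hbB⟩
      · exact hbB.2.2 h
    · by_cases hconB : q ∈ connectedComponentIn FB p
      · -- FB is preconnected: contradict minimality with B'
        have heq : FB = connectedComponentIn FB p := by
          apply Subset.antisymm
          · intro x hx
            rcases hcompB x hx with h | h
            · exact h
            · rwa [← connectedComponentIn_eq hconB] at h
          · exact connectedComponentIn_subset _ _
        have hB'S : B' ∈ S := ⟨hB'cp, hB'pre, ⟨c, Or.inr rfl⟩, by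
          rw [show f ⁻¹' B' = FB from rfl, heq]; exact isPreconnected_connectedComponentIn⟩
        have hWB' : W ⊆ B' := hWmin.2 hB'S hB'W
        obtain ⟨a, haA⟩ := hAne
        rcases hWB' haA.1 with h | h
        · exact hdisAB.le_bot ⟨haA, h⟩
        · exact haA.2.2 h
      · -- both preimages disconnected: K is disconnected, contradiction
        set N := connectedComponentIn FA p ∪ connectedComponentIn FB p with hNdef
        set M := connectedComponentIn FA q ∪ connectedComponentIn FB q with hMdef
        have hWA'B' : W ⊆ A' ∪ B' := by
          intro z hzW
          rcases eq_or_ne z c with rfl | hzc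
          · exact Or.inl (Or.inr rfl)
          · rcases hcov ⟨hzW, hzc⟩ with h | h
            · exact Or.inl (Or.inl ⟨hzW, h, hzc⟩)
            · exact Or.inr (Or.inl ⟨hzW, h, hzc⟩)
        have hKNM : K ⊆ N ∪ M := by
          intro x hx
          have : f x ∈ A' ∪ B' := hWA'B' hx
          rcases this with h | h
          · rcases hcompA x h with h' | h'
            · exact Or.inl (Or.inl h')
            · exact Or.inr (Or.inl h')
          · rcases hcompB x h with h' | h'
            · exact Or.inl (Or.inr h')
            · exact Or.inr (Or.inr h')
        have hA'B'c : A' ∩ B' ⊆ {c} := by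
          rintro z ⟨hzA | rfl, hzB | h⟩
          · exact (hdisAB.le_bot ⟨hzA, hzB⟩).elim
          · exact h
          · exact (hcB hzB).elim
          · rfl
        have hFAB : FA ∩ FB ⊆ {p, q} := by
          rintro z ⟨hzA, hzB⟩
          have : f z ∈ ({c} : Set Y) := hA'B'c ⟨hzA, hzB⟩
          have : z ∈ f ⁻¹' {c} := this
          rwa [hpre_c] at this
        have hdisNM : Disjoint N M := by
          rw [disjoint_left]
          rintro z (hz | hz) (hz' | hz')
          · have e1 := connectedComponentIn_eq hz
            have e2 := connectedComponentIn_eq hz'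
            exact hconA ((e1.trans e2.symm).symm ▸ mem_connectedComponentIn hqFA)
          · have hzpq : z ∈ ({p, q} : Set X) := hFAB
              ⟨connectedComponentIn_subset _ _ hz, connectedComponentIn_subset _ _ hz'⟩
            rcases hzpq with rfl | rfl
            · have e := connectedComponentIn_eq hz'
              exact hconB (e ▸ mem_connectedComponentIn hqFB)
            · exact hconA hz
          · have hzpq : z ∈ ({p, q} : Set X) := hFAB
              ⟨connectedComponentIn_subset _ _ hz', connectedComponentIn_subset _ _ hz⟩
            rcases hzpq with rfl | rfl
            · have e := connectedComponentIn_eq hz'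
              exact hconA (e ▸ mem_connectedComponentIn hqFA)
            · exact hconB hz
          · have e1 := connectedComponentIn_eq hz
            have e2 := connectedComponentIn_eq hz'
            exact hconB ((e1.trans e2.symm).symm ▸ mem_connectedComponentIn hqFB)
        have hNcl : IsClosed N :=
          (NW.isClosed_connectedComponentIn hFAcp).union
            (NW.isClosed_connectedComponentIn hFBcp)
        have hMcl : IsClosed M :=
          (NW.isClosed_connectedComponentIn hFAcp).union
            (NW.isClosed_connectedComponentIn hFBcp)
        obtain ⟨U', V', hU', hV', hNU, hMV, hUV'⟩ :=
          SeparatedNhds.of_isCompact_isCompact hNcl.isCompact hMcl.isCompact hdisNM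
        obtain ⟨z, hzK, hzU', hzV'⟩ := hKpre U' V' hU' hV'
          (fun x hx => (hKNM hx).elim (fun h => Or.inl (hNU h)) (fun h => Or.inr (hMV h)))
          ⟨p, hpK, hNU (Or.inl (mem_connectedComponentIn hpFA))⟩
          ⟨q, hqK, hMV (Or.inl (mem_connectedComponentIn hqFA))⟩
        exact hUV'.le_bot ⟨hzU', hzV'⟩
  · -- W is a singleton: its preimage is a connected two-point set, absurd
    obtain ⟨y, hy⟩ := hWne
    have hWy : W = {y} := (Set.not_nontrivial_iff.mp hnt).eq_singleton_of_mem hy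
    obtain ⟨p, q, hpq, hpre⟩ := hpair y
    have hKeq : K = {p, q} := by rw [hKdef, hWy]; exact hpre
    obtain ⟨U', V', hU', hV', hpU, hqV, hUV'⟩ := t2_separation hpq
    rw [hKeq] at hKpre
    obtain ⟨z, hz, hzU, hzV⟩ := hKpre U' V' hU' hV'
      (by rintro w (rfl | rfl)
          · exact Or.inl hpU
          · exact Or.inr hqV)
      ⟨p, Or.inl rfl, hpU⟩ ⟨q, Or.inr rfl, hqV⟩
    exact hUV'.le_bot ⟨hzU, hzV⟩
end

section
/- If f is an open continuous exactly 2-to-1 map from a compact metric space X onto a space Y, then f is a local homeomorphism; in particular f is locally one-to-one. -/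
lemma key_injOn {X Y : Type} [MetricSpace X]
    [TopologicalSpace Y] (f : X → Y) (hcont : Continuous f)
    (hopen : IsOpenMap f)
    (hfib : ∀ y : Y, Nat.card (f ⁻¹' {y}) = 2) (x : X) :
    ∃ U : Set X, IsOpen U ∧ x ∈ U ∧ Set.InjOn f U := by
  have hcard : ∀ y : Y, (f ⁻¹' {y}).ncard = 2 := fun y => by
    rw [← Nat.card_coe_set_eq]; exact hfib y
  -- get the other point in the fiber of f x
  obtain ⟨a, b, hab, hset⟩ := Set.ncard_eq_two.mp (hcard (f x))
  have hxmem : x ∈ f ⁻¹' {f x} := rfl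
  rw [hset] at hxmem
  obtain ⟨x', hx'ne, hx'f⟩ : ∃ x', x' ≠ x ∧ f x' = f x := by
    rcases hxmem with rfl | rfl
    · refine ⟨b, fun h => hab h.symm, ?_⟩
      have : b ∈ f ⁻¹' {f x} := by rw [hset]; exact Or.inr rfl
      exact this
    · refine ⟨a, hab, ?_⟩
      have : a ∈ f ⁻¹' {f x} := by rw [hset]; exact Or.inl rfl
      exact this
  obtain ⟨U, V, hU, hV, hxU, hx'V, hUV⟩ := t2_separation hx'ne.symm
  refine ⟨U ∩ f ⁻¹' (f '' V), hU.inter ((hopen V hV).preimage hcont), ⟨hxU, ?_⟩, ?_⟩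
  · exact ⟨x', hx'V, hx'f⟩
  · rintro p ⟨hpU, hpV⟩ q ⟨hqU, _⟩ hfpq
    by_contra hpq
    -- fiber of f p is exactly {p, q}
    have hsub : ({p, q} : Set X) ⊆ f ⁻¹' {f p} := by
      rintro z (rfl | rfl)
      · exact rfl
      · exact hfpq.symm
    have hfin : (f ⁻¹' {f p}).Finite := by
      apply Set.finite_of_ncard_ne_zero; rw [hcard]; norm_num
    have heq : ({p, q} : Set X) = f ⁻¹' {f p} := by
      apply Set.eq_of_subset_of_ncard_le hsub _ hfin
      rw [hcard, Set.ncard_pair hpq]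
    obtain ⟨c, hcV, hcf⟩ := hpV
    have hc : c ∈ ({p, q} : Set X) := by rw [heq]; exact hcf
    rcases hc with rfl | rfl
    · exact hUV.le_bot ⟨hpU, hcV⟩
    · exact hUV.le_bot ⟨hqU, hcV⟩

/-- If `f` is an open continuous exactly 2-to-1 map from a compact metric
space `X` onto a space `Y`, then `f` is a local homeomorphism; in particular
`f` is locally one-to-one. -/
theorem open_two_to_one_is_local_homeomorphism {X Y : Type} [MetricSpace X]
    [CompactSpace X] [TopologicalSpace Y] (f : X → Y) (hcont : Continuous f)
    (hopen : IsOpenMap f) (hsurj : Function.Surjective f)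
    (hfib : ∀ y : Y, Nat.card (f ⁻¹' {y}) = 2) :
    IsLocalHomeomorph f ∧ ∀ x : X, ∃ U ∈ nhds x, Set.InjOn f U := by
  have key := key_injOn f hcont hopen hfib
  constructor
  · rw [isLocalHomeomorph_iff_isOpenEmbedding_restrict]
    intro x
    obtain ⟨U, hUo, hxU, hinj⟩ := key x
    refine ⟨U, hUo.mem_nhds hxU, ?_⟩
    rw [Topology.isOpenEmbedding_iff_continuous_injective_isOpenMap]
    exact ⟨hcont.comp continuous_subtype_val,
      fun a b h => Subtype.ext (hinj a.2 b.2 h), hopen.restrict hUo⟩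
  · intro x
    obtain ⟨U, hUo, hxU, hinj⟩ := key x
    exact ⟨U, hUo.mem_nhds hxU, hinj⟩
end

section
/- Every locally one-to-one continuous map defined on a compact metric space is a finite composition of simple maps. -/
open Set Function Topology
open scoped lp ENNReal

/-- A map between compact metric spaces is a finite composition of simple
maps: either it is itself a simple map (a continuous surjection whose point
inverses have exactly one or two points), or it is a composition of two such
finite compositions. -/
inductive IsCompOfSimpleMaps :
    ∀ {X Y : Type} [MetricSpace X] [CompactSpace X] [MetricSpace Y] [CompactSpace Y],
      (X → Y) → Prop
  | simple {X Y : Type} [MetricSpace X] [CompactSpace X] [MetricSpace Y] [CompactSpace Y]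
      (f : X → Y) (hcont : Continuous f) (hsurj : Function.Surjective f)
      (hfib : ∀ y : Y, Nat.card (f ⁻¹' {y}) = 1 ∨ Nat.card (f ⁻¹' {y}) = 2) :
      IsCompOfSimpleMaps f
  | comp {X Y Z : Type} [MetricSpace X] [CompactSpace X] [MetricSpace Y] [CompactSpace Y]
      [MetricSpace Z] [CompactSpace Z] (g : Y → Z) (f : X → Y) :
      IsCompOfSimpleMaps g → IsCompOfSimpleMaps f → IsCompOfSimpleMaps (g ∘ f)

/-!
Cover `X` by closed sets `A₁, …, Aₙ` on each of which `f` is injective, and induct on `n`.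
For `n ≥ 2`, a fibre of `f` meets `A₁ ∪ A₂` in at most two points, so gluing the points of
`A₁ ∪ A₂` that lie in a common fibre of `f` is a simple map `q`. Then `f = g ∘ q` with `g`
injective on each of the `n - 1` closed sets `q (A₁ ∪ A₂), q A₃, …, q Aₙ`.
-/

theorem Set.natCard_eq_one_or_two_of_mem {α : Type*} {s : Set α} {x : α} (hx : x ∈ s)
    (h : ∀ y ∈ s, ∀ z ∈ s, y = x ∨ z = x ∨ y = z) :
    Nat.card s = 1 ∨ Nat.card s = 2 := by
  rw [Nat.card_coe_set_eq]
  by_cases hy : ∃ y ∈ s, y ≠ x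
  · obtain ⟨y, hys, hyx⟩ := hy
    have hs : s = {x, y} := by
      refine Subset.antisymm (fun z hz => ?_) (insert_subset hx (singleton_subset_iff.mpr hys))
      rcases h y hys z hz with h | h | h
      exacts [absurd h hyx, Or.inl h, Or.inr h.symm]
    exact Or.inr (hs ▸ ncard_pair hyx.symm)
  · push Not at hy
    have hs : s = {x} := Subset.antisymm (fun z hz => hy z hz) (singleton_subset_iff.mpr hx)
    exact Or.inl (hs ▸ ncard_singleton x)

theorem Set.InjOn.eq_or_eq_or_eq_of_mem_union {α β : Type*} {f : α → β} {A B : Set α}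
    (hA : InjOn f A) (hB : InjOn f B) {x y z : α} (hx : x ∈ A ∪ B) (hy : y ∈ A ∪ B)
    (hz : z ∈ A ∪ B) (hxy : f x = f y) (hxz : f x = f z) : x = y ∨ x = z ∨ y = z := by
  rcases hx with hx | hx <;> rcases hy with hy | hy <;> rcases hz with hz | hz <;>
    first
    | exact Or.inl (hA hx hy hxy) | exact Or.inl (hB hx hy hxy)
    | exact Or.inr (Or.inl (hA hx hz hxz)) | exact Or.inr (Or.inl (hB hx hz hxz))
    | exact Or.inr (Or.inr (hA hy hz (hxy ▸ hxz)))
    | exact Or.inr (Or.inr (hB hy hz (hxy ▸ hxz)))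

section Collapse

variable {X Y : Type*} [MetricSpace X] [TopologicalSpace.SeparableSpace X]

/-- The image of `collapse f ρ` is the quotient of `X` gluing the points of the zero set of `ρ`
that lie in a common fibre of `f`, realised inside a metric space: the Kuratowski embedding
remembers `x` exactly where `ρ x ≠ 0`. -/
noncomputable def collapse (f : X → Y) (ρ : X → ℝ) (x : X) : Y × ℝ × ℓ^∞(ℕ, ℝ) :=
  (f x, ρ x, ρ x • kuratowskiEmbedding X x)

variable {f : X → Y} {ρ : X → ℝ}

theorem collapse_eq_collapse_iff {x y : X} :
    collapse f ρ x = collapse f ρ y ↔ f x = f y ∧ (x = y ∨ ρ x = 0 ∧ ρ y = 0) := by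
  simp only [collapse, Prod.mk.injEq]
  constructor
  · rintro ⟨hf, hρ, hK⟩
    refine ⟨hf, (eq_or_ne (ρ x) 0).symm.imp (fun h => ?_) (fun h => ⟨h, hρ ▸ h⟩)⟩
    rw [hρ] at hK h
    exact (kuratowskiEmbedding.isometry X).injective (smul_right_injective _ h hK)
  · rintro ⟨hf, rfl | ⟨hx, hy⟩⟩
    · simp
    · simp [hf, hx, hy]

theorem Continuous.collapse [TopologicalSpace Y] (hf : Continuous f) (hρ : Continuous ρ) :
    Continuous (collapse f ρ) :=
  hf.prodMk (hρ.prodMk (hρ.smul (kuratowskiEmbedding.isometry X).continuous))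

theorem natCard_fiber_rangeFactorization_collapse {A B : Set X} (hρ : ρ ⁻¹' {0} ⊆ A ∪ B)
    (hA : InjOn f A) (hB : InjOn f B) (c : range (collapse f ρ)) :
    Nat.card (rangeFactorization (collapse f ρ) ⁻¹' {c}) = 1 ∨
      Nat.card (rangeFactorization (collapse f ρ) ⁻¹' {c}) = 2 := by
  obtain ⟨x, rfl⟩ := rangeFactorization_surjective c
  refine natCard_eq_one_or_two_of_mem (x := x) rfl fun y hy z hz => ?_
  obtain ⟨hfy, rfl | ⟨hy, hx⟩⟩ := collapse_eq_collapse_iff.mp (Subtype.ext_iff.mp hy)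
  · exact Or.inl rfl
  obtain ⟨hfz, rfl | ⟨hz, -⟩⟩ := collapse_eq_collapse_iff.mp (Subtype.ext_iff.mp hz)
  · exact Or.inr (Or.inl rfl)
  rcases hA.eq_or_eq_or_eq_of_mem_union hB (hρ hx) (hρ hy) (hρ hz) hfy.symm hfz.symm
    with h | h | h
  exacts [Or.inl h.symm, Or.inr (Or.inl h.symm), Or.inr (Or.inr h)]

theorem injOn_fst_image_rangeFactorization_collapse {U : Set X} (hρ : U ⊆ ρ ⁻¹' {0}) :
    InjOn (fun c : range (collapse f ρ) => c.1.1) (rangeFactorization (collapse f ρ) '' U) := by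
  rintro _ ⟨x, hx, rfl⟩ _ ⟨y, hy, rfl⟩ hxy
  exact Subtype.ext (collapse_eq_collapse_iff.mpr ⟨hxy, Or.inr ⟨hρ hx, hρ hy⟩⟩)

end Collapse

structure IsInjOnClosedCover {X Y : Type*} [TopologicalSpace X] (f : X → Y)
    (l : List (Set X)) : Prop where
  isClosed : ∀ A ∈ l, IsClosed A
  injOn : ∀ A ∈ l, InjOn f A
  exists_mem : ∀ x, ∃ A ∈ l, x ∈ A

theorem exists_isInjOnClosedCover {X Y : Type*} [TopologicalSpace X] [CompactSpace X]
    [RegularSpace X] {f : X → Y} (hloc : ∀ x, ∃ U ∈ 𝓝 x, InjOn f U) :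
    ∃ l, IsInjOnClosedCover f l := by
  choose U hU hUinj using hloc
  choose V hV hVc hVU using fun x => exists_mem_nhds_isClosed_subset (hU x)
  obtain ⟨t, -, ht⟩ := isCompact_univ.elim_nhds_subcover V fun x _ => hV x
  refine ⟨t.toList.map V, ?_, ?_, fun x => ?_⟩
  · simpa using fun x _ => hVc x
  · simpa using fun x _ => (hUinj x).mono (hVU x)
  · obtain ⟨y, hy, hxy⟩ := mem_iUnion₂.mp (ht (mem_univ x))
    exact ⟨V y, List.mem_map_of_mem (Finset.mem_toList.mpr hy), hxy⟩

theorem IsInjOnClosedCover.glue {X Q Y : Type*} [TopologicalSpace X] [CompactSpace X]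
    [TopologicalSpace Q] [T2Space Q] {f : X → Y} {A B : Set X} {l : List (Set X)}
    (h : IsInjOnClosedCover f (A :: B :: l)) {q : X → Q} (hq : Continuous q)
    (hqsurj : Surjective q) {g : Q → Y} (hgq : g ∘ q = f) (hg : InjOn g (q '' (A ∪ B))) :
    IsInjOnClosedCover g (q '' (A ∪ B) :: l.map (q '' ·)) := by
  subst hgq
  refine ⟨?_, ?_, fun c => ?_⟩
  · simp only [List.mem_cons, List.mem_map]
    rintro C (rfl | ⟨C, hC, rfl⟩)
    · have hAB := (h.isClosed A (by simp)).union (h.isClosed B (by simp))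
      exact (hAB.isCompact.image hq).isClosed
    · exact ((h.isClosed C (by simp [hC])).isCompact.image hq).isClosed
  · simp only [List.mem_cons, List.mem_map]
    rintro C (rfl | ⟨C, hC, rfl⟩)
    · exact hg
    · exact (h.injOn C (by simp [hC])).image_of_comp
  · obtain ⟨x, rfl⟩ := hqsurj c
    obtain ⟨C, hC, hxC⟩ := h.exists_mem x
    simp only [List.mem_cons] at hC
    rcases hC with rfl | rfl | hC
    · exact ⟨_, List.mem_cons_self, mem_image_of_mem q (Or.inl hxC)⟩
    · exact ⟨_, List.mem_cons_self, mem_image_of_mem q (Or.inr hxC)⟩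
    · exact ⟨_, List.mem_cons_of_mem _ (List.mem_map_of_mem hC), mem_image_of_mem q hxC⟩

namespace IsCompOfSimpleMaps

theorem of_bijective {X Y : Type} [MetricSpace X] [CompactSpace X] [MetricSpace Y]
    [CompactSpace Y] {f : X → Y} (hf : Continuous f) (hbij : Bijective f) :
    IsCompOfSimpleMaps f := by
  refine .simple f hf hbij.surjective fun y => ?_
  obtain ⟨x, rfl⟩ := hbij.surjective y
  exact natCard_eq_one_or_two_of_mem (x := x) rfl fun y hy _ _ => Or.inl (hbij.injective hy)

theorem of_isInjOnClosedCover {X Y : Type} [MetricSpace X] [CompactSpace X] [MetricSpace Y]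
    [CompactSpace Y] {f : X → Y} (hf : Continuous f) (hsurj : Surjective f) {l : List (Set X)}
    (hl : IsInjOnClosedCover f l) : IsCompOfSimpleMaps f :=
  match l, hl with
  | [], hl => of_bijective hf ⟨fun x => by simpa using hl.exists_mem x, hsurj⟩
  | [A], hl => by
    refine of_bijective hf ⟨fun x y hxy => ?_, hsurj⟩
    exact hl.injOn A (List.mem_singleton_self A) (by simpa using hl.exists_mem x)
      (by simpa using hl.exists_mem y) hxy
  | A :: B :: l, hl => by
    obtain ⟨ρ, hρ, -⟩ :=
      perfectlyNormalSpace_iff_forall_isClosed_preimage_zero.mp inferInstance (A ∪ B)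
        ((hl.isClosed A (by simp)).union (hl.isClosed B (by simp)))
    have hφ := hf.collapse ρ.continuous
    have : CompactSpace (range (collapse f ρ)) :=
      isCompact_iff_compactSpace.mp (isCompact_range hφ)
    let q := rangeFactorization (collapse f ρ)
    let g : range (collapse f ρ) → Y := fun c => c.1.1
    have hgq : g ∘ q = f := rfl
    have hq_simple : IsCompOfSimpleMaps q := .simple q hφ.rangeFactorization
      rangeFactorization_surjective <| natCard_fiber_rangeFactorization_collapse hρ.ge
        (hl.injOn A (by simp)) (hl.injOn B (by simp))
    have hg_cover := hl.glue hφ.rangeFactorization rangeFactorization_surjective hgq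
      (injOn_fst_image_rangeFactorization_collapse hρ.le)
    have hg_surj : Surjective g := .of_comp (hgq ▸ hsurj)
    exact hgq ▸ .comp g q (of_isInjOnClosedCover (by fun_prop) hg_surj hg_cover) hq_simple
termination_by l.length

end IsCompOfSimpleMaps

/-- (Borsuk–Molski) Every locally one-to-one continuous map from a compact
metric space onto a compact metric space is a finite composition of simple
maps. -/
theorem locally_injective_is_comp_of_simple {X Y : Type} [MetricSpace X]
    [CompactSpace X] [MetricSpace Y] [CompactSpace Y] (f : X → Y)
    (hcont : Continuous f) (hsurj : Function.Surjective f)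
    (hloc : ∀ x : X, ∃ U ∈ nhds x, Set.InjOn f U) :
    IsCompOfSimpleMaps f := by
  obtain ⟨l, hl⟩ := exists_isInjOnClosedCover hloc
  exact .of_isInjOnClosedCover hcont hsurj hl
end

section
/- There exists a continuous exactly 3-to-1 map from the closed unit interval onto the circle, but no such map can be written as a finite composition of maps each of which is exactly 2-to-1 or exactly 1-to-1. -/
/-!
Fibre cardinalities multiply under composition, so a finite composition of exactly 2-to-1 and
exactly 1-to-1 maps is exactly `2 ^ k`-to-1 for some `k`, never 3-to-1.

For the 3-to-1 map, let `h : [0, 1] → [0, 1]` be the function with `h (x / 2) = h x / 4` that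
on `(1/2, 1]` is the zigzag `1/4 ↗ 1 ↘ 1/4 ↗ 1`, and wrap it around the circle by
`t ↦ exp (2πi h t)`. A value `c ∈ (1/4, 1)` is taken three times on `(1/2, 1]` and never below
`1/2`; the value `1/4` is taken at `5/6` and, by rescaling, at the halves `1/3, 1/2` of the two
preimages of `1`; smaller values reduce to these by rescaling. Finally, `h` takes the value `0`
only at `0` and `1` only at `2/3` and `1`, and `0` and `1` are the same point of the circle.
-/

/-- A map between compact metric spaces is a finite composition of maps each
of which is exactly 2-to-1 or exactly 1-to-1 (i.e. a continuous bijection):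
either it is itself such a map, or it is a composition of two such finite
compositions. -/
inductive IsCompOfTwoOrOneToOne :
    ∀ {X Y : Type} [MetricSpace X] [CompactSpace X] [MetricSpace Y] [CompactSpace Y],
      (X → Y) → Prop
  | base {X Y : Type} [MetricSpace X] [CompactSpace X] [MetricSpace Y] [CompactSpace Y]
      (f : X → Y) (hcont : Continuous f) (hsurj : Function.Surjective f)
      (hfib : (∀ y : Y, Nat.card (f ⁻¹' {y}) = 2) ∨ (∀ y : Y, Nat.card (f ⁻¹' {y}) = 1)) :
      IsCompOfTwoOrOneToOne f
  | comp {X Y Z : Type} [MetricSpace X] [CompactSpace X] [MetricSpace Y] [CompactSpace Y]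
      [MetricSpace Z] [CompactSpace Z] (g : Y → Z) (f : X → Y) :
      IsCompOfTwoOrOneToOne g → IsCompOfTwoOrOneToOne f → IsCompOfTwoOrOneToOne (g ∘ f)

open Set Real

theorem Nat.card_preimage_comp_eq_mul {X Y Z : Type*} {f : X → Y} {g : Y → Z} {a b : ℕ}
    (ha : a ≠ 0) (hb : b ≠ 0) (hg : ∀ z, Nat.card (g ⁻¹' {z}) = a)
    (hf : ∀ y, Nat.card (f ⁻¹' {y}) = b) (z : Z) :
    Nat.card ((g ∘ f) ⁻¹' {z}) = a * b := by
  have : Fintype (g ⁻¹' {z}) :=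
    @Fintype.ofFinite _ (Nat.finite_of_card_ne_zero (by rwa [hg]))
  have (y : Y) : Finite (f ⁻¹' {y}) := Nat.finite_of_card_ne_zero (by rwa [hf])
  let e : (Σ y : g ⁻¹' {z}, f ⁻¹' {(y : Y)}) ≃ (g ∘ f) ⁻¹' {z} :=
    { toFun := fun p => ⟨p.2, show g (f p.2) = z from (congrArg g p.2.2).trans p.1.2⟩
      invFun := fun x => ⟨⟨f x, x.2⟩, ⟨x, rfl⟩⟩
      left_inv := by
        rintro ⟨⟨y, hy⟩, ⟨x, hx⟩⟩
        obtain rfl : f x = y := hx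
        rfl
      right_inv := fun _ => rfl }
  rw [← Nat.card_congr e, Nat.card_sigma]
  simp [hf, hg, ← Nat.card_eq_fintype_card]

theorem IsCompOfTwoOrOneToOne.exists_card_preimage_eq_two_pow {X Y : Type} [MetricSpace X]
    [CompactSpace X] [MetricSpace Y] [CompactSpace Y] {f : X → Y}
    (hf : IsCompOfTwoOrOneToOne f) : ∃ k : ℕ, ∀ y, Nat.card (f ⁻¹' {y}) = 2 ^ k := by
  induction hf with
  | base f _ _ hfib => exact hfib.elim (fun h => ⟨1, h⟩) (fun h => ⟨0, h⟩)
  | comp g f _ _ ihg ihf =>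
    obtain ⟨k, hk⟩ := ihg
    obtain ⟨l, hl⟩ := ihf
    refine ⟨k + l, fun z => ?_⟩
    rw [Nat.card_preimage_comp_eq_mul (by positivity) (by positivity) hk hl, pow_add]

theorem Circle.exp_two_pi_mul_eq_iff {a b : ℝ} :
    Circle.exp (2 * π * a) = Circle.exp (2 * π * b) ↔ ∃ m : ℤ, a = b + m := by
  rw [Circle.exp_eq_exp]
  refine exists_congr fun m => ⟨fun h => ?_, fun h => by rw [h]; ring⟩
  have := pi_pos
  nlinarith

theorem Circle.exists_eq_exp_two_pi_mul (y : Circle) :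
    ∃ c ∈ Ico (0 : ℝ) 1, Circle.exp (2 * π * c) = y := by
  refine ⟨Int.fract ((y : ℂ).arg / (2 * π)), ⟨Int.fract_nonneg _, Int.fract_lt_one _⟩,
    ?_⟩
  rw [Int.fract, mul_sub, mul_div_cancel₀ _ (by positivity), mul_comm,
    Circle.periodic_exp.sub_int_mul_eq, Circle.exp_arg]

theorem Nat.card_preimage_val_eq_ncard {α : Type*} {s t : Set α} (hts : t ⊆ s) :
    Nat.card ((Subtype.val : s → α) ⁻¹' t) = t.ncard := by
  rw [Nat.card_coe_set_eq, ncard_preimage_of_injective_subset_range Subtype.val_injective]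
  simpa using hts

noncomputable def zigzag (x : ℝ) : ℝ :=
  if x ≤ 2/3 then 1/4 + 9/2 * (x - 1/2)
  else if x ≤ 5/6 then 1 - 9/2 * (x - 2/3)
  else 1/4 + 9/2 * (x - 5/6)

theorem continuous_zigzag : Continuous zigzag := by
  have hlast : Continuous fun x : ℝ =>
      if x ≤ 5/6 then 1 - 9/2 * (x - 2/3) else 1/4 + 9/2 * (x - 5/6) :=
    Continuous.if_le (by fun_prop) (by fun_prop) continuous_id continuous_const
      fun x hx => by rw [hx]; norm_num
  exact Continuous.if_le (by fun_prop) hlast continuous_id continuous_const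
    fun x hx => by rw [hx]; norm_num

theorem zigzag_mem_Icc {x : ℝ} (hx : x ∈ Icc (1/2) 1) : zigzag x ∈ Icc (1/4) 1 := by
  obtain ⟨h1, h2⟩ := hx
  unfold zigzag
  split_ifs <;> constructor <;> linarith

theorem zigzag_fiber_of_mem_Ioo {c : ℝ} (hc : c ∈ Ioo (1/4) 1) :
    Ioc (1/2) 1 ∩ zigzag ⁻¹' {c} =
      {1/2 + 2/9 * (c - 1/4), 2/3 + 2/9 * (1 - c), 5/6 + 2/9 * (c - 1/4)} := by
  obtain ⟨hc1, hc2⟩ := hc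
  ext x
  simp only [zigzag, mem_inter_iff, mem_Ioc, mem_preimage, mem_singleton_iff, mem_insert_iff]
  constructor
  · rintro ⟨⟨hx1, hx2⟩, h⟩
    split_ifs at h
    · left; linarith
    · right; left; linarith
    · right; right; linarith
  · rintro (rfl | rfl | rfl)
    · rw [if_pos (by linarith)]
      exact ⟨⟨by linarith, by linarith⟩, by ring⟩
    · rw [if_neg (by linarith), if_pos (by linarith)]
      exact ⟨⟨by linarith, by linarith⟩, by ring⟩
    · rw [if_neg (by linarith), if_neg (by linarith)]
      exact ⟨⟨by linarith, by linarith⟩, by ring⟩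

theorem zigzag_fiber_one : Ioc (1/2) 1 ∩ zigzag ⁻¹' {1} = {2/3, 1} := by
  ext x
  simp only [zigzag, mem_inter_iff, mem_Ioc, mem_preimage, mem_singleton_iff, mem_insert_iff]
  constructor
  · rintro ⟨⟨hx1, hx2⟩, h⟩
    split_ifs at h
    · left; linarith
    · left; linarith
    · right; linarith
  · rintro (rfl | rfl) <;> norm_num

theorem zigzag_fiber_quarter : Ioc (1/2) 1 ∩ zigzag ⁻¹' {1/4} = {5/6} := by
  ext x
  simp only [zigzag, mem_inter_iff, mem_Ioc, mem_preimage, mem_singleton_iff]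
  constructor
  · rintro ⟨⟨hx1, hx2⟩, h⟩
    split_ifs at h <;> linarith
  · rintro rfl; norm_num

noncomputable def zigzagProfile (u : ℝ) : ℝ :=
  zigzag (2 ^ (u - 1)) / (2 ^ (u - 1)) ^ 2

theorem zigzagProfile_mem_Icc {u : ℝ} (hu : u ∈ Icc 0 1) : zigzagProfile u ∈ Icc (1/4) 4 := by
  have h1 : (1/2 : ℝ) ≤ 2 ^ (u - 1) := by
    rw [show (1/2 : ℝ) = 2 ^ ((0:ℝ) - 1) by norm_num]
    exact rpow_le_rpow_of_exponent_le (by norm_num) (by linarith [hu.1])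
  have h2 : (2 : ℝ) ^ (u - 1) ≤ 1 :=
    rpow_le_one_of_one_le_of_nonpos (by norm_num) (by linarith [hu.2])
  obtain ⟨hz1, hz2⟩ := zigzag_mem_Icc ⟨h1, h2⟩
  have hpos : (0:ℝ) < (2 ^ (u - 1)) ^ 2 := by positivity
  unfold zigzagProfile
  constructor
  · rw [le_div_iff₀ hpos]; nlinarith
  · rw [div_le_iff₀ hpos]; nlinarith

/-- As `zigzagProfile ∘ Int.fract` is one-periodic, `selfSimilarZigzag (x / 2)` is
`selfSimilarZigzag x / 4`. The profile is chosen so that the function is `zigzag` on `(1/2, 1]`,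
and `zigzag 1 = 4 * zigzag (1/2)` makes it agree at `0` and `1`, hence the function continuous. -/
noncomputable def selfSimilarZigzag (x : ℝ) : ℝ :=
  x ^ 2 * zigzagProfile (Int.fract (logb 2 x))

theorem selfSimilarZigzag_mem_Icc (x : ℝ) :
    selfSimilarZigzag x ∈ Icc (x ^ 2 / 4) (4 * x ^ 2) := by
  obtain ⟨h1, h2⟩ :=
    zigzagProfile_mem_Icc ⟨Int.fract_nonneg (logb 2 x), (Int.fract_lt_one _).le⟩
  unfold selfSimilarZigzag
  constructor <;> nlinarith [sq_nonneg x]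

theorem selfSimilarZigzag_nonneg (x : ℝ) : 0 ≤ selfSimilarZigzag x :=
  le_trans (by positivity) (selfSimilarZigzag_mem_Icc x).1

@[simp]
theorem selfSimilarZigzag_zero : selfSimilarZigzag 0 = 0 := by
  simp [selfSimilarZigzag]

theorem selfSimilarZigzag_eq_zero_iff {x : ℝ} : selfSimilarZigzag x = 0 ↔ x = 0 := by
  refine ⟨fun h => ?_, fun h => h ▸ selfSimilarZigzag_zero⟩
  have := (selfSimilarZigzag_mem_Icc x).1
  rw [h] at this
  nlinarith [sq_nonneg x]

theorem selfSimilarZigzag_half (x : ℝ) : selfSimilarZigzag (x / 2) = selfSimilarZigzag x / 4 := by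
  rcases eq_or_ne x 0 with rfl | hx
  · simp [selfSimilarZigzag]
  · rw [selfSimilarZigzag, selfSimilarZigzag, logb_div hx two_ne_zero, logb_self_eq_one one_lt_two,
      Int.fract_sub_one]
    ring

theorem selfSimilarZigzag_eq_zigzag {x : ℝ} (hx : x ∈ Ioc (1/2) 1) :
    selfSimilarZigzag x = zigzag x := by
  obtain ⟨h1, h2⟩ := hx
  rcases h2.lt_or_eq with h2 | rfl
  · have hx0 : 0 < x := by linarith
    have hfract : Int.fract (logb 2 x) = logb 2 x + 1 := by
      rw [Int.fract_eq_iff]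
      refine ⟨?_, ?_, -1, by push_cast; ring⟩
      · have : -1 < logb 2 x := by
          rw [lt_logb_iff_rpow_lt one_lt_two hx0]; norm_num; linarith
        linarith
      · have : logb 2 x < 0 := logb_neg one_lt_two hx0 h2
        linarith
    rw [selfSimilarZigzag, hfract, zigzagProfile, add_sub_cancel_right,
      rpow_logb two_pos (by norm_num) hx0]
    field_simp
  · norm_num [selfSimilarZigzag, zigzagProfile, zigzag]

theorem selfSimilarZigzag_le_one {x : ℝ} (hx : x ∈ Icc 0 1) : selfSimilarZigzag x ≤ 1 := by
  rcases le_or_gt x (1/2) with hx2 | hx2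
  · nlinarith [(selfSimilarZigzag_mem_Icc x).2, hx.1]
  · rw [selfSimilarZigzag_eq_zigzag ⟨hx2, hx.2⟩]
    exact (zigzag_mem_Icc ⟨hx2.le, hx.2⟩).2

theorem continuous_selfSimilarZigzag : Continuous selfSimilarZigzag := by
  have hpow : Continuous fun u : ℝ => (2 : ℝ) ^ (u - 1) := by fun_prop (disch := norm_num)
  have hprofile : Continuous fun u => zigzagProfile (Int.fract u) :=
    ContinuousOn.comp_fract'' (f := zigzagProfile)
      ((continuous_zigzag.comp hpow).div (hpow.pow 2)
        fun u => pow_ne_zero 2 (rpow_pos_of_pos two_pos _).ne').continuousOn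
      (by norm_num [zigzagProfile, zigzag])
  rw [continuous_iff_continuousAt]
  intro x
  rcases eq_or_ne x 0 with rfl | hx
  · rw [ContinuousAt, selfSimilarZigzag_zero]
    refine squeeze_zero selfSimilarZigzag_nonneg (fun y => (selfSimilarZigzag_mem_Icc y).2) ?_
    exact (by fun_prop : Continuous fun y : ℝ => 4 * y ^ 2).tendsto' 0 0 (by simp)
  · exact (continuous_pow 2).continuousAt.mul
      (hprofile.continuousAt.comp (continuousAt_logb hx))

theorem selfSimilarZigzag_fiber (c : ℝ) :
    Ioc 0 1 ∩ selfSimilarZigzag ⁻¹' {c} =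
      (Ioc (1/2) 1 ∩ zigzag ⁻¹' {c}) ∪
        (· / 2) '' (Ioc 0 1 ∩ selfSimilarZigzag ⁻¹' {4 * c}) := by
  ext x
  simp only [mem_union, mem_image, mem_inter_iff, mem_Ioc, mem_preimage, mem_singleton_iff]
  constructor
  · rintro ⟨⟨hx0, hx1⟩, hx⟩
    rcases le_or_gt x (1/2) with hx2 | hx2
    · refine Or.inr ⟨2 * x, ⟨⟨by linarith, by linarith⟩, ?_⟩, by ring⟩
      have := selfSimilarZigzag_half (2 * x)
      rw [mul_div_cancel_left₀ x two_ne_zero, hx] at this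
      linarith
    · exact Or.inl ⟨⟨hx2, hx1⟩, selfSimilarZigzag_eq_zigzag ⟨hx2, hx1⟩ ▸ hx⟩
  · rintro (⟨hx, h⟩ | ⟨y, ⟨⟨hy0, hy1⟩, hy⟩, rfl⟩)
    · exact ⟨⟨by linarith [hx.1], hx.2⟩, (selfSimilarZigzag_eq_zigzag hx).trans h⟩
    · refine ⟨⟨by linarith, by linarith⟩, ?_⟩
      rw [selfSimilarZigzag_half, hy]
      ring

theorem selfSimilarZigzag_fiber_of_one_lt {c : ℝ} (hc : 1 < c) :
    Ioc 0 1 ∩ selfSimilarZigzag ⁻¹' {c} = ∅ :=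
  eq_empty_of_forall_notMem fun _ ⟨hx, hxc⟩ =>
    (selfSimilarZigzag_le_one (Ioc_subset_Icc_self hx)).not_gt (hxc ▸ hc)

theorem selfSimilarZigzag_fiber_one : Ioc 0 1 ∩ selfSimilarZigzag ⁻¹' {1} = {2/3, 1} := by
  rw [selfSimilarZigzag_fiber, zigzag_fiber_one, selfSimilarZigzag_fiber_of_one_lt (by norm_num),
    image_empty, union_empty]

theorem selfSimilarZigzag_fiber_of_lt_quarter {c : ℝ} (hc : c < 1/4) :
    Ioc 0 1 ∩ selfSimilarZigzag ⁻¹' {c} =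
      (· / 2) '' (Ioc 0 1 ∩ selfSimilarZigzag ⁻¹' {4 * c}) := by
  have hzigzag : Ioc (1/2) 1 ∩ zigzag ⁻¹' {c} = ∅ :=
    eq_empty_of_forall_notMem fun _ ⟨hx, hxc⟩ =>
      (zigzag_mem_Icc (Ioc_subset_Icc_self hx)).1.not_gt (hxc ▸ hc)
  rw [selfSimilarZigzag_fiber, hzigzag, empty_union]

theorem ncard_selfSimilarZigzag_fiber_of_mem_Ico {c : ℝ} (hc : c ∈ Ico (1/4) 1) :
    (Ioc 0 1 ∩ selfSimilarZigzag ⁻¹' {c}).ncard = 3 := by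
  obtain ⟨hc1, hc2⟩ := hc
  rcases hc1.eq_or_lt with rfl | hc1
  · rw [selfSimilarZigzag_fiber, zigzag_fiber_quarter, show (4 : ℝ) * (1/4) = 1 by norm_num,
      selfSimilarZigzag_fiber_one, image_pair, singleton_union]
    exact ncard_eq_three.2 ⟨_, _, _, by norm_num, by norm_num, by norm_num, rfl⟩
  · rw [selfSimilarZigzag_fiber, zigzag_fiber_of_mem_Ioo ⟨hc1, hc2⟩,
      selfSimilarZigzag_fiber_of_one_lt (by linarith), image_empty, union_empty]
    exact ncard_eq_three.2 ⟨_, _, _, by intro h; linarith, by intro h; linarith,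
      by intro h; linarith, rfl⟩

theorem ncard_selfSimilarZigzag_fiber {c : ℝ} (hc : c ∈ Ioo 0 1) :
    (Ioc 0 1 ∩ selfSimilarZigzag ⁻¹' {c}).ncard = 3 := by
  obtain ⟨n, hn⟩ := pow_unbounded_of_one_lt (1 / (4 * c)) (by norm_num : (1 : ℝ) < 4)
  rw [div_lt_iff₀ (by linarith [hc.1])] at hn
  induction n generalizing c with
  | zero => exact ncard_selfSimilarZigzag_fiber_of_mem_Ico ⟨by rw [pow_zero, one_mul] at hn; linarith, hc.2⟩
  | succ n ih =>
    rcases le_or_gt (1/4) c with hc1 | hc1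
    · exact ncard_selfSimilarZigzag_fiber_of_mem_Ico ⟨hc1, hc.2⟩
    · rw [selfSimilarZigzag_fiber_of_lt_quarter hc1,
        ncard_image_of_injective _ fun a b h => by simpa using h]
      exact ih ⟨by linarith [hc.1], by linarith⟩ (by rw [pow_succ] at hn; linarith)

noncomputable def threeToOneMap (t : unitInterval) : Circle :=
  Circle.exp (2 * π * selfSimilarZigzag t)

theorem continuous_threeToOneMap : Continuous threeToOneMap :=
  Circle.exp.continuous.comp
    (continuous_const.mul (continuous_selfSimilarZigzag.comp continuous_subtype_val))

theorem threeToOneMap_preimage_of_mem_Ioo {c : ℝ} (hc : c ∈ Ioo 0 1) :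
    threeToOneMap ⁻¹' {Circle.exp (2 * π * c)} =
      Subtype.val ⁻¹' (Ioc 0 1 ∩ selfSimilarZigzag ⁻¹' {c}) := by
  ext t
  simp only [mem_preimage, mem_singleton_iff, mem_inter_iff, mem_Ioc, threeToOneMap,
    Circle.exp_two_pi_mul_eq_iff]
  obtain ⟨hc0, hc1⟩ := hc
  constructor
  · rintro ⟨m, hm⟩
    have h0 := selfSimilarZigzag_nonneg t
    have h1 := selfSimilarZigzag_le_one t.2
    obtain rfl : m = 0 := by
      have hlo : (-1 : ℤ) < m := by exact_mod_cast (by linarith : (-1 : ℝ) < m)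
      have hhi : m < 1 := by exact_mod_cast (by linarith : (m : ℝ) < 1)
      omega
    rw [Int.cast_zero, add_zero] at hm
    have ht : (t : ℝ) ≠ 0 := fun ht => by
      rw [ht, selfSimilarZigzag_zero] at hm
      linarith
    exact ⟨⟨lt_of_le_of_ne t.2.1 (Ne.symm ht), t.2.2⟩, hm⟩
  · rintro ⟨-, hm⟩
    exact ⟨0, by rw [hm, Int.cast_zero, add_zero]⟩

theorem threeToOneMap_preimage_one :
    threeToOneMap ⁻¹' {1} = Subtype.val ⁻¹' {0, 2/3, 1} := by
  ext t
  have hfiber := Set.ext_iff.1 selfSimilarZigzag_fiber_one t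
  have hmem : threeToOneMap t = 1 ↔ ∃ m : ℤ, selfSimilarZigzag t = m := by
    simpa [threeToOneMap] using Circle.exp_two_pi_mul_eq_iff (a := selfSimilarZigzag t) (b := 0)
  simp only [mem_preimage, mem_singleton_iff, hmem, mem_insert_iff]
  simp only [mem_inter_iff, mem_Ioc, mem_preimage, mem_insert_iff, mem_singleton_iff] at hfiber
  constructor
  · rintro ⟨m, hm⟩
    have h0 := selfSimilarZigzag_nonneg t
    have h1 := selfSimilarZigzag_le_one t.2
    have hlo : (0 : ℤ) ≤ m := by exact_mod_cast hm ▸ h0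
    have hhi : m ≤ 1 := by exact_mod_cast hm ▸ h1
    obtain rfl | rfl : m = 0 ∨ m = 1 := by omega
    · exact Or.inl (selfSimilarZigzag_eq_zero_iff.1 (by exact_mod_cast hm))
    · refine Or.inr (hfiber.1 ⟨⟨lt_of_le_of_ne t.2.1 fun ht => ?_, t.2.2⟩,
        by exact_mod_cast hm⟩)
      rw [← ht, selfSimilarZigzag_zero] at hm
      norm_num at hm
  · rintro (ht | ht)
    · exact ⟨0, by rw [ht, selfSimilarZigzag_zero, Int.cast_zero]⟩
    · exact ⟨1, by rw [(hfiber.2 ht).2, Int.cast_one]⟩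

theorem card_threeToOneMap_preimage (y : Circle) : Nat.card (threeToOneMap ⁻¹' {y}) = 3 := by
  obtain ⟨c, ⟨hc0, hc1⟩, rfl⟩ := Circle.exists_eq_exp_two_pi_mul y
  rcases hc0.eq_or_lt with rfl | hc0
  · rw [mul_zero, Circle.exp_zero, threeToOneMap_preimage_one,
      Nat.card_preimage_val_eq_ncard (by norm_num [insert_subset_iff])]
    exact ncard_eq_three.2 ⟨_, _, _, by norm_num, by norm_num, by norm_num, rfl⟩
  · rw [threeToOneMap_preimage_of_mem_Ioo ⟨hc0, hc1⟩,
      Nat.card_preimage_val_eq_ncard fun x hx => Ioc_subset_Icc_self hx.1]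
    exact ncard_selfSimilarZigzag_fiber ⟨hc0, hc1⟩

theorem surjective_threeToOneMap : Function.Surjective threeToOneMap := fun y =>
  nonempty_of_ncard_ne_zero (s := threeToOneMap ⁻¹' {y})
    (by rw [← Nat.card_coe_set_eq, card_threeToOneMap_preimage]; norm_num)

/-- There is a continuous exactly 3-to-1 map from the unit interval onto the
circle, but no such map is a finite composition of maps each of which is
exactly 2-to-1 or exactly 1-to-1. -/
theorem three_to_one_interval_onto_circle_not_comp :
    (∃ f : unitInterval → Circle, Continuous f ∧ Function.Surjective f ∧
        ∀ y : Circle, Nat.card (f ⁻¹' {y}) = 3) ∧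
      ∀ f : unitInterval → Circle, Continuous f → Function.Surjective f →
        (∀ y : Circle, Nat.card (f ⁻¹' {y}) = 3) → ¬ IsCompOfTwoOrOneToOne f := by
  refine ⟨⟨threeToOneMap, continuous_threeToOneMap, surjective_threeToOneMap,
    card_threeToOneMap_preimage⟩, fun f _ _ hf hcomp => ?_⟩
  obtain ⟨k, hk⟩ := hcomp.exists_card_preimage_eq_two_pow
  have h3 : 2 ^ k = 3 := (hk 1).symm.trans (hf 1)
  rcases k with _ | k
  · norm_num at h3
  · rw [pow_succ] at h3
    omega
end
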